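/- Let M : H(n) → ℝ^m be an r-complete measurement. Then there exists a constant C > 0, independent of the error scale, such that for every ε > 0, every X_r ∈ S_r^n, and every Hermitian E with ‖M(E)‖₂ ≤ ε, the following holds with b := M(X_r + E): every Y that minimizes tr(Y) over the set {Y ∈ H(n) : Y ⪰ 0 and ‖M(Y) − b‖₂ ≤ ε} satisfies ‖Y − X_r‖₂ ≤ C·ε. -/

import Mathlib

open Matrix
open scoped ComplexOrder

noncomputable section

/-- The Frobenius norm `‖X‖₂` of a complex matrix. -/
def frobNorm {n : ℕ} (X : Matrix (Fin n) (Fin n) ℂ) : ℝ :=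
  Real.sqrt (∑ i, ∑ j, Complex.normSq (X i j))

def rComplete {n : ℕ} {ι : Type*} [Fintype ι]
    (M : Matrix (Fin n) (Fin n) ℂ →ₗ[ℝ] EuclideanSpace ℝ ι) (r : ℕ) : Prop :=
  ∀ X X' : Matrix (Fin n) (Fin n) ℂ, X.PosSemidef → X.rank ≤ r → X'.PosSemidef →
    X ≠ X' → M X ≠ M X'

/-!
Put `D := A - B` with `A ⪰ 0` and `B` Hermitian of rank at most `r`, and split `D = D⁺ - D⁻` into
its positive and negative parts. As `D⁺ D⁻ = 0`, both parts have Frobenius norm at most `‖D‖`, and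
since `A ⪰ 0` the range of `D⁻` meets `ker B` trivially, so `rank D⁻ ≤ r`. After normalising
`‖D‖ = 1`, the pairs `(D⁺, D⁻)` lie in a compact set (the rank is lower semicontinuous) on which
`r`-completeness makes `‖M (D⁺ - D⁻)‖` positive, hence at least some `c > 0`. This gives
`c ‖A - B‖ ≤ ‖M (A - B)‖`, and for feasible `Y` we have `‖M (Y - X_r)‖ ≤ ‖M Y - b‖ + ‖M E‖ ≤ 2ε`,
so `C = 2 / c` works.
-/

open scoped MatrixOrder

attribute [local instance] Matrix.frobeniusNormedAddCommGroup Matrix.frobeniusNormedSpace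

namespace Matrix

variable {𝕜 : Type*} {m n : Type*} [Fintype m] [Fintype n]

lemma isClosed_setOf_posSemidef [RCLike 𝕜] : IsClosed {A : Matrix n n 𝕜 | A.PosSemidef} := by
  simp only [posSemidef_iff_dotProduct_mulVec, IsHermitian, Set.ofPred_and, Set.ofPred_forall]
  exact (isClosed_eq (by fun_prop) continuous_id).inter
    (isClosed_iInter fun x => isClosed_le continuous_const (by fun_prop))

lemma lt_rank_iff_exists_linearIndependent [Field 𝕜] (A : Matrix m n 𝕜) (r : ℕ) :
    r < A.rank ↔ ∃ f : Fin (r + 1) → n, LinearIndependent 𝕜 (A.col ∘ f) := by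
  rw [rank_eq_finrank_span_cols]
  constructor
  · intro hr
    obtain ⟨κ, a, ha, hspan, hli⟩ := exists_linearIndependent' 𝕜 A.col
    have : Fintype κ := Fintype.ofInjective a ha
    rw [← hspan, finrank_span_eq_card hli] at hr
    obtain ⟨e⟩ : Nonempty (Fin (r + 1) ↪ κ) :=
      Function.Embedding.nonempty_of_card_le (by simpa using hr)
    exact ⟨a ∘ e, hli.comp e e.injective⟩
  · rintro ⟨f, hli⟩
    calc r < Fintype.card (Fin (r + 1)) := by simp
      _ = _ := (finrank_span_eq_card hli).symm
      _ ≤ _ := Submodule.finrank_mono (Submodule.span_mono (Set.range_comp_subset_range f A.col))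

lemma isClosed_setOf_rank_le [NontriviallyNormedField 𝕜] [CompleteSpace 𝕜] (r : ℕ) :
    IsClosed {A : Matrix m n 𝕜 | A.rank ≤ r} := by
  simp only [← isOpen_compl_iff, Set.compl_ofPred, not_le, lt_rank_iff_exists_linearIndependent,
    Set.ofPred_exists]
  refine isOpen_iUnion fun f => ?_
  have hcols : Continuous fun A : Matrix m n 𝕜 => A.col ∘ f :=
    continuous_pi fun k => continuous_pi fun i => continuous_apply_apply i (f k)
  exact isOpen_setOfPred_linearIndependent.preimage hcols

variable [RCLike 𝕜]

lemma frobenius_norm_sq_eq_re_trace (X : Matrix m n 𝕜) :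
    ‖X‖ ^ 2 = RCLike.re (X * Xᴴ).trace := by
  rw [frobenius_norm_def, ← Real.sqrt_eq_rpow, Real.sq_sqrt (by positivity)]
  simp only [trace, diag_apply, mul_apply, conjTranspose_apply, RCLike.star_def, RCLike.mul_conj,
    map_sum, ← RCLike.ofReal_pow, RCLike.ofReal_re, Real.rpow_two]

lemma frobenius_norm_sub_sq_of_mul_eq_zero {P N : Matrix n n 𝕜} (hP : P.IsHermitian)
    (hN : N.IsHermitian) (hPN : P * N = 0) : ‖P - N‖ ^ 2 = ‖P‖ ^ 2 + ‖N‖ ^ 2 := by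
  have hNP : N * P = 0 := by rw [← hP.eq, ← hN.eq, ← conjTranspose_mul, hPN, conjTranspose_zero]
  simp only [frobenius_norm_sq_eq_re_trace, conjTranspose_sub, hP.eq, hN.eq, sub_mul, mul_sub,
    hPN, hNP, trace_sub, trace_zero, map_sub, map_zero]
  ring

/-- The range of `N` meets `ker B` trivially: there the quadratic form of `A` is that of `-N`. -/
lemma rank_le_of_sub_eq_sub {A B P N : Matrix n n 𝕜} (hA : A.PosSemidef) (hN : N.PosSemidef)
    (hPN : P * N = 0) (h : P - N = A - B) : N.rank ≤ B.rank := by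
  have hdisj : Disjoint (LinearMap.range N.mulVecLin) (LinearMap.ker B.mulVecLin) := by
    rw [Submodule.disjoint_def]
    rintro _ ⟨y, rfl⟩ hBx
    set x := N *ᵥ y
    have hBx : B *ᵥ x = 0 := hBx
    have hAx : A *ᵥ x = -(N *ᵥ x) := by
      have hPx : P *ᵥ x = 0 := by simp [x, mulVec_mulVec, hPN]
      have := congrArg (· *ᵥ x) h
      simp only [sub_mulVec, hPx, hBx, zero_sub, sub_zero] at this
      exact this.symm
    have hNx : N *ᵥ x = 0 := by
      rw [← hN.dotProduct_mulVec_zero_iff]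
      refine le_antisymm ?_ (hN.dotProduct_mulVec_nonneg x)
      simpa [hAx] using hA.dotProduct_mulVec_nonneg x
    show x = 0
    rw [← dotProduct_star_self_eq_zero]
    calc star x ⬝ᵥ x = star y ⬝ᵥ (N *ᵥ x) := by
          rw [star_mulVec, ← dotProduct_mulVec, hN.isHermitian.eq]
      _ = 0 := by rw [hNx, dotProduct_zero]
  have hrank := B.mulVecLin.finrank_range_add_finrank_ker
  have hsum := Submodule.finrank_add_finrank_le_of_disjoint hdisj
  rw [rank, rank]
  omega

/-- The witnesses are the positive and negative parts of `A - B`. -/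
lemma PosSemidef.exists_sub_eq_sub [DecidableEq n] {A B : Matrix n n 𝕜} (hA : A.PosSemidef)
    (hB : B.IsHermitian) :
    ∃ P N : Matrix n n 𝕜, P.PosSemidef ∧ N.PosSemidef ∧ P - N = A - B ∧
      N.rank ≤ B.rank ∧ ‖P‖ ≤ ‖A - B‖ ∧ ‖N‖ ≤ ‖A - B‖ := by
  set D := A - B
  have hP : (D⁺).PosSemidef := nonneg_iff_posSemidef.mp (CFC.posPart_nonneg D)
  have hN : (D⁻).PosSemidef := nonneg_iff_posSemidef.mp (CFC.negPart_nonneg D)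
  have hPN : D⁺ * D⁻ = 0 := CFC.posPart_mul_negPart D
  have hD : D⁺ - D⁻ = D := CFC.posPart_sub_negPart D (hA.isHermitian.sub hB).isSelfAdjoint
  have hnorm := frobenius_norm_sub_sq_of_mul_eq_zero hP.isHermitian hN.isHermitian hPN
  rw [hD] at hnorm
  refine ⟨D⁺, D⁻, hP, hN, hD, rank_le_of_sub_eq_sub hA hN hPN hD, ?_, ?_⟩ <;>
    nlinarith [norm_nonneg D, norm_nonneg D⁺, norm_nonneg D⁻]

end Matrix

lemma frobNorm_eq_norm {n : ℕ} (X : Matrix (Fin n) (Fin n) ℂ) : frobNorm X = ‖X‖ := by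
  simp [frobNorm, frobenius_norm_def, Real.sqrt_eq_rpow, Complex.normSq_eq_norm_sq]

lemma rComplete.exists_pos_mul_norm_le {n m r : ℕ}
    {M : Matrix (Fin n) (Fin n) ℂ →ₗ[ℝ] EuclideanSpace ℝ (Fin m)} (hM : rComplete M r) :
    ∃ c > (0 : ℝ), ∀ A B : Matrix (Fin n) (Fin n) ℂ, A.PosSemidef → B.IsHermitian → B.rank ≤ r →
      c * ‖A - B‖ ≤ ‖M (A - B)‖ := by
  set T : Set (Matrix (Fin n) (Fin n) ℂ × Matrix (Fin n) (Fin n) ℂ) :=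
    {q | q.1.PosSemidef ∧ q.2.PosSemidef ∧ q.2.rank ≤ r ∧ ‖q.1‖ ≤ 1 ∧ ‖q.2‖ ≤ 1 ∧
      ‖q.1 - q.2‖ = 1}
  have hMc : Continuous M := M.continuous_of_finiteDimensional
  have hT : IsCompact T := by
    refine ((isCompact_closedBall 0 1).prod (isCompact_closedBall 0 1)).of_isClosed_subset ?_
      fun q hq => ⟨mem_closedBall_zero_iff.mpr hq.2.2.2.1, mem_closedBall_zero_iff.mpr hq.2.2.2.2.1⟩
    exact (isClosed_setOf_posSemidef.preimage continuous_fst).inter <|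
      (isClosed_setOf_posSemidef.preimage continuous_snd).inter <|
      ((isClosed_setOf_rank_le r).preimage continuous_snd).inter <|
      (isClosed_le continuous_fst.norm continuous_const).inter <|
      (isClosed_le continuous_snd.norm continuous_const).inter <|
      isClosed_eq (continuous_fst.sub continuous_snd).norm continuous_const
  have hpos : ∀ q ∈ T, (0 : ℝ) < ‖M (q.1 - q.2)‖ := by
    rintro ⟨P, N⟩ ⟨hP, hN, hNr, -, -, hPN⟩
    rw [norm_pos_iff, map_sub, sub_ne_zero]
    refine (hM N P hN hNr hP fun h => ?_).symm
    simp [h] at hPN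
  obtain ⟨c, hc, hcT⟩ := hT.exists_forall_le' (by fun_prop) hpos
  refine ⟨c, hc, fun A B hA hB hBr => ?_⟩
  obtain ⟨P, N, hP, hN, hPN, hNr, hPle, hNle⟩ := hA.exists_sub_eq_sub hB
  rcases eq_or_ne (A - B) 0 with hD | hD
  · simp [hD]
  have hDpos : 0 < ‖A - B‖ := norm_pos_iff.mpr hD
  set t := ‖A - B‖⁻¹
  have ht : 0 < t := inv_pos.mpr hDpos
  have hscale : ∀ X : Matrix (Fin n) (Fin n) ℂ, ‖X‖ ≤ ‖A - B‖ → ‖t • X‖ ≤ 1 := fun X hX => by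
    rw [norm_smul, Real.norm_of_nonneg ht.le]
    exact (mul_le_mul_of_nonneg_left hX ht.le).trans_eq (inv_mul_cancel₀ hDpos.ne')
  have hmem : (t • P, t • N) ∈ T := by
    refine ⟨hP.smul ht.le, hN.smul ht.le, ?_, hscale P hPle, hscale N hNle, ?_⟩
    · have hrank : ((t : ℂ) • N).rank = N.rank := rank_smul_of_mem_nonZeroDivisors N
        (mem_nonZeroDivisors_of_ne_zero (Complex.ofReal_ne_zero.mpr ht.ne'))
      exact (hrank.trans_le hNr).trans hBr
    · show ‖t • P - t • N‖ = 1
      rw [← smul_sub, hPN, norm_smul, Real.norm_of_nonneg ht.le, inv_mul_cancel₀ hDpos.ne']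
  have hc' := hcT _ hmem
  rw [← smul_sub, hPN, map_smul, norm_smul, Real.norm_of_nonneg ht.le, le_inv_mul_iff₀ hDpos]
    at hc'
  rwa [mul_comm]

/-- if `M` is `r`-complete then there is `C > 0` such that for all `ε > 0`,
all `X_r ∈ S_r^n` and all Hermitian `E` with `‖M(E)‖₂ ≤ ε`, every minimizer `Y` of `tr(Y)`
over `{Y ⪰ 0 : ‖M(Y) − b‖₂ ≤ ε}` with `b = M(X_r + E)` satisfies `‖Y − X_r‖₂ ≤ C·ε`. -/
theorem stmt10 {n m r : ℕ}
    (M : Matrix (Fin n) (Fin n) ℂ →ₗ[ℝ] EuclideanSpace ℝ (Fin m))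
    (hM : rComplete M r) :
    ∃ C > (0 : ℝ), ∀ ε > (0 : ℝ),
      ∀ Xr : Matrix (Fin n) (Fin n) ℂ, Xr.PosSemidef → Xr.rank ≤ r →
      ∀ E : Matrix (Fin n) (Fin n) ℂ, E.IsHermitian → ‖M E‖ ≤ ε →
      ∀ Y : Matrix (Fin n) (Fin n) ℂ, Y.PosSemidef → ‖M Y - M (Xr + E)‖ ≤ ε →
        (∀ Z : Matrix (Fin n) (Fin n) ℂ, Z.PosSemidef → ‖M Z - M (Xr + E)‖ ≤ ε →
          (Y.trace).re ≤ (Z.trace).re) →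
        frobNorm (Y - Xr) ≤ C * ε := by
  obtain ⟨c, hc, hstab⟩ := hM.exists_pos_mul_norm_le
  refine ⟨2 / c, by positivity, fun ε _ Xr hXr hXrr E _ hME Y hY hYfeas _ => ?_⟩
  have hMYX : ‖M (Y - Xr)‖ ≤ 2 * ε := calc
    ‖M (Y - Xr)‖ = ‖(M Y - M (Xr + E)) + M E‖ := by rw [map_sub, map_add]; abel_nf
    _ ≤ ‖M Y - M (Xr + E)‖ + ‖M E‖ := norm_add_le _ _
    _ ≤ 2 * ε := by linarith
  rw [frobNorm_eq_norm, div_mul_eq_mul_div, le_div_iff₀ hc, mul_comm]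
  exact (hstab Y Xr hY hXr.isHermitian hXrr).trans hMYX
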